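/- Let g₁ : {0,1}^n → {-1,1} be defined by g₁(x) = -1 iff |x| = 1. Then the spectral norm of g₁ is Θ(√n), i.e., there are constants c, C > 0 with c√n ≤ ‖g₁^‖₁ ≤ C√n for all sufficiently large n. -/

import Mathlib

open Finset

noncomputable def fhat {n : ℕ} (f : (Fin n → ZMod 2) → ℝ) (S : Finset (Fin n)) : ℝ :=
  (∑ x : Fin n → ZMod 2, f x * (-1 : ℝ) ^ (∑ i ∈ S, (x i).val)) / 2 ^ n

lemma zmod2_em (a : ZMod 2) : a = 0 ∨ a = 1 := by revert a; decide

lemma chi_sum {n : ℕ} (S : Finset (Fin n)) :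
    ∑ x : Fin n → ZMod 2, (-1 : ℝ) ^ (∑ i ∈ S, (x i).val)
      = if S = ∅ then (2 : ℝ) ^ n else 0 := by
  have key : ∀ x : Fin n → ZMod 2, (-1 : ℝ) ^ (∑ i ∈ S, (x i).val)
      = ∏ i : Fin n, (if i ∈ S then (-1 : ℝ) ^ (x i).val else 1) := by
    intro x
    rw [Finset.prod_ite_mem, univ_inter, Finset.prod_pow_eq_pow_sum]
  calc ∑ x : Fin n → ZMod 2, (-1 : ℝ) ^ (∑ i ∈ S, (x i).val)
      = ∑ x : Fin n → ZMod 2, ∏ i : Fin n, (if i ∈ S then (-1 : ℝ) ^ (x i).val else 1) :=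
        Finset.sum_congr rfl fun x _ => key x
    _ = ∏ i : Fin n, ∑ b : ZMod 2, (if i ∈ S then (-1 : ℝ) ^ b.val else 1) :=
        (Fintype.prod_sum (fun (i : Fin n) (b : ZMod 2) =>
          if i ∈ S then (-1 : ℝ) ^ b.val else 1)).symm
    _ = ∏ i : Fin n, (if i ∈ S then (0:ℝ) else 2) := by
        refine Finset.prod_congr rfl fun i _ => ?_
        have huniv : (univ : Finset (ZMod 2)) = {0, 1} := by decide
        rw [huniv, Finset.sum_pair (by decide : (0 : ZMod 2) ≠ 1)]
        by_cases h : i ∈ S <;>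
          simp [h, show ((0:ZMod 2)).val = 0 from rfl, show ((1:ZMod 2)).val = 1 from rfl] <;>
          norm_num
    _ = if S = ∅ then (2:ℝ)^n else 0 := by
        by_cases h : S = ∅
        · simp [h, Finset.card_univ]
        · obtain ⟨j, hj⟩ := Finset.nonempty_iff_ne_empty.mpr h
          rw [if_neg h]
          exact Finset.prod_eq_zero (mem_univ j) (by simp [hj])

def e1 {n : ℕ} (j : Fin n) : Fin n → ZMod 2 := fun i => if i = j then 1 else 0

lemma e1_weight {n : ℕ} (j : Fin n) : (∑ i, ((e1 j) i).val) = 1 := by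
  have h : ∀ i : Fin n, ((e1 j) i).val = if i = j then 1 else 0 := by
    intro i; unfold e1; split <;> rfl
  rw [Finset.sum_congr rfl fun i _ => h i]
  simp

lemma e1_chi {n : ℕ} (S : Finset (Fin n)) (j : Fin n) :
    (-1 : ℝ) ^ (∑ i ∈ S, ((e1 j) i).val) = if j ∈ S then -1 else 1 := by
  have h : ∀ i : Fin n, ((e1 j) i).val = if i = j then 1 else 0 := by
    intro i; unfold e1; split <;> rfl
  rw [Finset.sum_congr rfl fun i _ => h i]
  rw [Finset.sum_ite_eq' S j (fun _ => 1)]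
  split <;> norm_num

lemma weight1_sum {n : ℕ} (S : Finset (Fin n)) :
    ∑ x : Fin n → ZMod 2,
        (if (∑ i, (x i).val) = 1 then (1 : ℝ) else 0) * (-1 : ℝ) ^ (∑ i ∈ S, (x i).val)
      = (n : ℝ) - 2 * S.card := by
  have hsum : ∑ x : Fin n → ZMod 2,
        (if (∑ i, (x i).val) = 1 then (1 : ℝ) else 0) * (-1:ℝ)^(∑ i ∈ S, (x i).val)
      = ∑ x ∈ univ.filter (fun x : Fin n → ZMod 2 => (∑ i, (x i).val) = 1),
          (-1:ℝ)^(∑ i ∈ S, (x i).val) := by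
    rw [Finset.sum_filter]
    exact Finset.sum_congr rfl fun x _ => by split <;> simp
  rw [hsum]
  have hbij : ∑ x ∈ univ.filter (fun x : Fin n → ZMod 2 => (∑ i, (x i).val) = 1),
        (-1:ℝ)^(∑ i ∈ S, (x i).val)
      = ∑ j : Fin n, (if j ∈ S then (-1:ℝ) else 1) := by
    refine (Finset.sum_bij (fun (j : Fin n) _ => e1 j) ?_ ?_ ?_ ?_).symm
    · intro j _
      simp [Finset.mem_filter, e1_weight]
    · intro j1 _ j2 _ h
      by_contra hne
      have h1 := congrFun h j1
      simp only [e1, if_pos rfl] at h1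
      rw [if_neg hne] at h1
      exact one_ne_zero h1
    · intro x hx
      rw [Finset.mem_filter] at hx
      obtain ⟨-, hx1⟩ := hx
      have hv : ∀ i : Fin n, (x i).val = if x i = 1 then 1 else 0 := by
        intro i
        rcases zmod2_em (x i) with h | h <;>
          simp [h, show ((0:ZMod 2)).val = 0 from rfl, show ((1:ZMod 2)).val = 1 from rfl]
      rw [Finset.sum_congr rfl fun i _ => hv i] at hx1
      have hcard : (univ.filter (fun i : Fin n => x i = 1)).card = 1 := by
        rw [Finset.card_eq_sum_ones, Finset.sum_filter]
        simpa using hx1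
      obtain ⟨j, hj⟩ := Finset.card_eq_one.mp hcard
      refine ⟨j, Finset.mem_univ j, ?_⟩
      funext i
      by_cases hij : i = j
      · subst hij
        have hmem : i ∈ univ.filter (fun i : Fin n => x i = 1) := by
          rw [hj]; exact Finset.mem_singleton_self i
        rw [Finset.mem_filter] at hmem
        simp [e1, hmem.2]
      · have hnm : i ∉ univ.filter (fun i : Fin n => x i = 1) := by
          rw [hj]; simp [hij]
        have hxi : x i ≠ 1 := fun h => hnm (Finset.mem_filter.mpr ⟨Finset.mem_univ i, h⟩)
        rcases zmod2_em (x i) with h0 | h1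
        · simp [e1, hij, h0]
        · exact absurd h1 hxi
    · intro j _
      exact (e1_chi S j).symm
  rw [hbij]
  have hrw : ∀ j : Fin n, (if j ∈ S then (-1:ℝ) else 1) = 1 - 2 * (if j ∈ S then (1:ℝ) else 0) := by
    intro j; split <;> ring
  simp only [hrw]
  rw [Finset.sum_sub_distrib, Finset.sum_const, ← Finset.mul_sum, Finset.sum_boole]
  have : (univ.filter (fun j : Fin n => j ∈ S)) = S := by
    ext j; simp
  rw [this]
  simp [Finset.card_univ, mul_comm]

lemma fhat_g1 {n : ℕ} (S : Finset (Fin n)) :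
    fhat (fun x : Fin n → ZMod 2 => if (∑ i, (x i).val) = 1 then (-1 : ℝ) else 1) S
      = (if S = ∅ then 1 else 0) - 2 * ((n : ℝ) - 2 * S.card) / 2 ^ n := by
  unfold fhat
  have hpt : ∀ x : Fin n → ZMod 2,
      (if (∑ i, (x i).val) = 1 then (-1 : ℝ) else 1) * (-1 : ℝ) ^ (∑ i ∈ S, (x i).val)
        = (-1:ℝ) ^ (∑ i ∈ S, (x i).val)
          - 2 * ((if (∑ i, (x i).val) = 1 then (1:ℝ) else 0)
              * (-1:ℝ)^(∑ i ∈ S, (x i).val)) := by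
    intro x; split <;> ring
  rw [Finset.sum_congr rfl fun x _ => hpt x, Finset.sum_sub_distrib, ← Finset.mul_sum,
    chi_sum, weight1_sum, sub_div]
  have h2 : (2:ℝ)^n ≠ 0 := by positivity
  congr 1
  split
  · exact div_self h2
  · exact zero_div _

lemma sum_card_fn {n : ℕ} (h : ℕ → ℝ) :
    ∑ S : Finset (Fin n), h S.card = ∑ k ∈ range (n + 1), (n.choose k : ℝ) * h k := by
  rw [← Finset.powerset_univ, Finset.sum_powerset, Finset.card_univ, Fintype.card_fin]
  refine Finset.sum_congr rfl fun k _ => ?_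
  have hcongr : ∀ t ∈ Finset.powersetCard k (univ : Finset (Fin n)), h t.card = h k :=
    fun t ht => by rw [(Finset.mem_powersetCard.mp ht).2]
  rw [Finset.sum_congr rfl hcongr, Finset.sum_const, Finset.card_powersetCard, Finset.card_univ,
    Fintype.card_fin, nsmul_eq_mul]

lemma pascal_sum (n : ℕ) (f : ℕ → ℝ) :
    ∑ k ∈ range (n + 2), ((n + 1).choose k : ℝ) * f k
      = ∑ k ∈ range (n + 1), (n.choose k : ℝ) * (f k + f (k + 1)) := by
  rw [Finset.sum_range_succ']
  have hps : ∀ k : ℕ, ((n + 1).choose (k + 1) : ℝ) = (n.choose k : ℝ) + (n.choose (k+1) : ℝ) := by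
    intro k; rw [Nat.choose_succ_succ]; push_cast; ring
  simp only [hps, add_mul, Finset.sum_add_distrib, Nat.choose_zero_right, Nat.cast_one, one_mul]
  have h2 : ∑ k ∈ range (n + 1), (n.choose (k+1) : ℝ) * f (k+1) + f 0
      = ∑ k ∈ range (n + 1), (n.choose k : ℝ) * f k := by
    have h3 := Finset.sum_range_succ' (fun k => (n.choose k : ℝ) * f k) (n+1)
    rw [Finset.sum_range_succ] at h3
    simp only [Nat.choose_succ_self, Nat.cast_zero, zero_mul, add_zero,
      Nat.choose_zero_right, Nat.cast_one, one_mul] at h3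
    linarith [h3]
  simp only [mul_add, Finset.sum_add_distrib]
  linarith [h2]

lemma sum_choose_real (n : ℕ) : ∑ k ∈ range (n+1), (n.choose k : ℝ) = 2 ^ n := by
  exact_mod_cast congrArg (fun m : ℕ => (m : ℝ)) (Nat.sum_range_choose n)

lemma S2_id (n : ℕ) :
    ∑ k ∈ range (n+1), (n.choose k : ℝ) * ((n:ℝ) - 2*k)^2 = (n:ℝ) * 2 ^ n := by
  induction n with
  | zero => simp
  | succ n ih =>
    have key := pascal_sum n (fun k => (((n:ℝ)+1) - 2*(k:ℝ))^2)
    push_cast at key ⊢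
    rw [show n+1+1 = n+2 from rfl, key]
    have h2 : ∀ k ∈ range (n+1),
        (n.choose k : ℝ) * (((n:ℝ)+1 - 2*(k:ℝ))^2 + ((n:ℝ)+1 - 2*((k:ℝ)+1))^2)
          = 2 * ((n.choose k : ℝ) * ((n:ℝ) - 2*(k:ℝ))^2) + 2 * (n.choose k : ℝ) := by
      intro k _; ring
    rw [Finset.sum_congr rfl h2, Finset.sum_add_distrib, ← Finset.mul_sum, ← Finset.mul_sum,
      ih, sum_choose_real]
    ring

lemma S4_id (n : ℕ) :
    ∑ k ∈ range (n+1), (n.choose k : ℝ) * ((n:ℝ) - 2*k)^4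
      = (3*(n:ℝ)^2 - 2*(n:ℝ)) * 2 ^ n := by
  induction n with
  | zero => simp
  | succ n ih =>
    have key := pascal_sum n (fun k => (((n:ℝ)+1) - 2*(k:ℝ))^4)
    push_cast at key ⊢
    rw [show n+1+1 = n+2 from rfl, key]
    have h2 : ∀ k ∈ range (n+1),
        (n.choose k : ℝ) * (((n:ℝ)+1 - 2*(k:ℝ))^4 + ((n:ℝ)+1 - 2*((k:ℝ)+1))^4)
          = 2 * ((n.choose k : ℝ) * ((n:ℝ) - 2*(k:ℝ))^4)
            + 12 * ((n.choose k : ℝ) * ((n:ℝ) - 2*(k:ℝ))^2) + 2 * (n.choose k : ℝ) := by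
      intro k _; ring
    rw [Finset.sum_congr rfl h2, Finset.sum_add_distrib, Finset.sum_add_distrib,
      ← Finset.mul_sum, ← Finset.mul_sum, ← Finset.mul_sum, ih, S2_id, sum_choose_real]
    ring

lemma S1_upper (n : ℕ) :
    ∑ k ∈ range (n+1), (n.choose k : ℝ) * |(n:ℝ) - 2*k| ≤ 2^n * Real.sqrt n := by
  have hA : (0:ℝ) ≤ ∑ k ∈ range (n+1), (n.choose k : ℝ) * |(n:ℝ) - 2*k| :=
    Finset.sum_nonneg fun k _ => by positivity
  have cs := Finset.sum_mul_sq_le_sq_mul_sq (range (n+1))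
    (fun k => Real.sqrt (n.choose k))
    (fun k => Real.sqrt (n.choose k) * |(n:ℝ) - 2*k|)
  have e1 : ∀ k ∈ range (n+1),
      Real.sqrt (n.choose k) * (Real.sqrt (n.choose k) * |(n:ℝ)-2*k|)
        = (n.choose k : ℝ) * |(n:ℝ)-2*k| := by
    intro k _; rw [← mul_assoc, Real.mul_self_sqrt (by positivity)]
  have e2 : ∀ k ∈ range (n+1), (Real.sqrt (n.choose k))^2 = (n.choose k:ℝ) :=
    fun k _ => Real.sq_sqrt (by positivity)
  have e3 : ∀ k ∈ range (n+1),
      (Real.sqrt (n.choose k) * |(n:ℝ)-2*k|)^2 = (n.choose k:ℝ) * ((n:ℝ)-2*k)^2 := by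
    intro k _; rw [mul_pow, Real.sq_sqrt (by positivity), sq_abs]
  rw [Finset.sum_congr rfl e1, Finset.sum_congr rfl e2, Finset.sum_congr rfl e3,
    sum_choose_real, S2_id] at cs
  calc ∑ k ∈ range (n+1), (n.choose k : ℝ) * |(n:ℝ) - 2*k|
      = Real.sqrt ((∑ k ∈ range (n+1), (n.choose k : ℝ) * |(n:ℝ) - 2*k|)^2) :=
        (Real.sqrt_sq hA).symm
    _ ≤ Real.sqrt ((2:ℝ)^n * ((n:ℝ)*2^n)) := Real.sqrt_le_sqrt cs
    _ = 2^n * Real.sqrt n := by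
        rw [show (2:ℝ)^n * ((n:ℝ)*2^n) = ((2:ℝ)^n)^2 * (n:ℝ) by ring,
          Real.sqrt_mul (by positivity), Real.sqrt_sq (by positivity)]

lemma S1_lower {n : ℕ} (hn : 1 ≤ n) :
    2^n * Real.sqrt n / 2 ≤ ∑ k ∈ range (n+1), (n.choose k : ℝ) * |(n:ℝ) - 2*k| := by
  have hm : (1:ℝ) ≤ (n:ℝ) := by exact_mod_cast hn
  have ht : (0:ℝ) < 2^n := by positivity
  have hA : (0:ℝ) ≤ ∑ k ∈ range (n+1), (n.choose k : ℝ) * |(n:ℝ) - 2*k| :=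
    Finset.sum_nonneg fun k _ => by positivity
  have hB : (0:ℝ) ≤ ∑ k ∈ range (n+1), (n.choose k : ℝ) * |(n:ℝ) - 2*k|^3 :=
    Finset.sum_nonneg fun k _ => by positivity
  -- CS 1 : (∑ C y²)² ≤ (∑ C y)(∑ C y³)
  have cs1 := Finset.sum_mul_sq_le_sq_mul_sq (range (n+1))
    (fun k => Real.sqrt ((n.choose k : ℝ) * |(n:ℝ) - 2*k|))
    (fun k => Real.sqrt ((n.choose k : ℝ) * |(n:ℝ) - 2*k|) * |(n:ℝ) - 2*k|)
  have e1 : ∀ k ∈ range (n+1),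
      Real.sqrt ((n.choose k : ℝ) * |(n:ℝ) - 2*k|)
          * (Real.sqrt ((n.choose k : ℝ) * |(n:ℝ) - 2*k|) * |(n:ℝ) - 2*k|)
        = (n.choose k : ℝ) * |(n:ℝ) - 2*k|^2 := by
    intro k _; rw [← mul_assoc, Real.mul_self_sqrt (by positivity)]; ring
  have e2 : ∀ k ∈ range (n+1),
      (Real.sqrt ((n.choose k : ℝ) * |(n:ℝ) - 2*k|))^2 = (n.choose k : ℝ) * |(n:ℝ) - 2*k| :=
    fun k _ => Real.sq_sqrt (by positivity)
  have e3 : ∀ k ∈ range (n+1),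
      (Real.sqrt ((n.choose k : ℝ) * |(n:ℝ) - 2*k|) * |(n:ℝ) - 2*k|)^2
        = (n.choose k : ℝ) * |(n:ℝ) - 2*k|^3 := by
    intro k _; rw [mul_pow, Real.sq_sqrt (by positivity)]; ring
  rw [Finset.sum_congr rfl e1, Finset.sum_congr rfl e2, Finset.sum_congr rfl e3] at cs1
  -- CS 2 : (∑ C y³)² ≤ (∑ C y²)(∑ C y⁴)
  have cs2 := Finset.sum_mul_sq_le_sq_mul_sq (range (n+1))
    (fun k => Real.sqrt ((n.choose k : ℝ)) * |(n:ℝ) - 2*k|)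
    (fun k => Real.sqrt ((n.choose k : ℝ)) * |(n:ℝ) - 2*k|^2)
  have f1 : ∀ k ∈ range (n+1),
      (Real.sqrt ((n.choose k : ℝ)) * |(n:ℝ) - 2*k|)
          * (Real.sqrt ((n.choose k : ℝ)) * |(n:ℝ) - 2*k|^2)
        = (n.choose k : ℝ) * |(n:ℝ) - 2*k|^3 := by
    intro k _; rw [mul_mul_mul_comm, Real.mul_self_sqrt (by positivity)]; ring
  have f2 : ∀ k ∈ range (n+1),
      (Real.sqrt ((n.choose k : ℝ)) * |(n:ℝ) - 2*k|)^2
        = (n.choose k : ℝ) * |(n:ℝ) - 2*k|^2 := by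
    intro k _; rw [mul_pow, Real.sq_sqrt (by positivity)]
  have f3 : ∀ k ∈ range (n+1),
      (Real.sqrt ((n.choose k : ℝ)) * |(n:ℝ) - 2*k|^2)^2
        = (n.choose k : ℝ) * |(n:ℝ) - 2*k|^4 := by
    intro k _; rw [mul_pow, Real.sq_sqrt (by positivity)]; ring
  rw [Finset.sum_congr rfl f1, Finset.sum_congr rfl f2, Finset.sum_congr rfl f3] at cs2
  -- moment values
  have hS2 : ∑ k ∈ range (n+1), (n.choose k : ℝ) * |(n:ℝ) - 2*k|^2 = (n:ℝ) * 2^n := by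
    rw [Finset.sum_congr rfl fun k _ => by rw [sq_abs]]
    exact S2_id n
  have hS4 : ∑ k ∈ range (n+1), (n.choose k : ℝ) * |(n:ℝ) - 2*k|^4
      = (3*(n:ℝ)^2 - 2*(n:ℝ)) * 2^n := by
    have habs4 : ∀ k ∈ range (n+1), (n.choose k : ℝ) * |(n:ℝ) - 2*k|^4
        = (n.choose k : ℝ) * ((n:ℝ) - 2*k)^4 := by
      intro k _
      rw [pow_abs, abs_of_nonneg (by positivity)]
    rw [Finset.sum_congr rfl habs4]
    exact S4_id n
  rw [hS2] at cs1
  rw [hS2, hS4] at cs2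
  set A := ∑ k ∈ range (n+1), (n.choose k : ℝ) * |(n:ℝ) - 2*k| with hAdef
  set B := ∑ k ∈ range (n+1), (n.choose k : ℝ) * |(n:ℝ) - 2*k|^3 with hBdef
  -- combine
  have hu : (n:ℝ)^4 * (2^n:ℝ)^4 ≤ A^2 * (3*(n:ℝ)^3) * ((2:ℝ)^n)^2 := by
    calc (n:ℝ)^4 * (2^n:ℝ)^4 = (((n:ℝ)*2^n)^2)^2 := by ring
      _ ≤ (A*B)^2 := by
          apply pow_le_pow_left₀ (sq_nonneg _) cs1
      _ = A^2 * B^2 := by ring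
      _ ≤ A^2 * ((n:ℝ)*2^n * ((3*(n:ℝ)^2 - 2*(n:ℝ)) * 2^n)) :=
          mul_le_mul_of_nonneg_left cs2 (sq_nonneg A)
      _ ≤ A^2 * (3*(n:ℝ)^3) * ((2:ℝ)^n)^2 := by
          nlinarith [sq_nonneg A, mul_nonneg (sq_nonneg A)
            (mul_nonneg (mul_nonneg (sq_nonneg (n:ℝ)) (le_of_lt ht)) (le_of_lt ht))]
  have hden : (0:ℝ) < (n:ℝ)^3 * ((2:ℝ)^n)^2 := by
    have : (0:ℝ) < (n:ℝ) := lt_of_lt_of_le one_pos hm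
    positivity
  have h5 : ((2:ℝ)^n)^2 * (n:ℝ) ≤ 4 * A^2 := by
    nlinarith [hu, hden, mul_nonneg (sq_nonneg A) hden.le]
  have hs : Real.sqrt (n:ℝ) ^ 2 = (n:ℝ) := Real.sq_sqrt (by positivity)
  have hfinal : ((2:ℝ)^n * Real.sqrt n / 2)^2 ≤ A^2 := by
    rw [div_pow, mul_pow, hs]
    norm_num
    linarith [h5]
  have := Real.sqrt_le_sqrt hfinal
  rwa [Real.sqrt_sq (by positivity), Real.sqrt_sq hA] at this

lemma twenty_le (n : ℕ) (h : 5 ≤ n) : 20 * n ≤ 9 * 2^n := by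
  induction n with
  | zero => omega
  | succ m ih =>
    rcases Nat.lt_or_ge m 5 with h5 | h5
    · have hm4 : m = 4 := by omega
      subst hm4; norm_num
    · have hih := ih h5
      have hp : 32 ≤ 2^m := by
        calc 32 = 2^5 := by norm_num
          _ ≤ 2^m := Nat.pow_le_pow_right (by norm_num) h5
      rw [pow_succ]
      omega

theorem g_one_spectral_norm :
    ∃ c C : ℝ, 0 < c ∧ 0 < C ∧ ∃ N : ℕ, ∀ n : ℕ, N ≤ n →
      c * Real.sqrt n ≤
        (∑ S : Finset (Fin n),
          |fhat (fun x : Fin n → ZMod 2 => if (∑ i, (x i).val) = 1 then (-1 : ℝ) else 1) S|) ∧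
      (∑ S : Finset (Fin n),
          |fhat (fun x : Fin n → ZMod 2 => if (∑ i, (x i).val) = 1 then (-1 : ℝ) else 1) S|) ≤
        C * Real.sqrt n := by
  refine ⟨1/10, 3, by norm_num, by norm_num, 5, fun n hn => ?_⟩
  have hn1 : 1 ≤ n := le_trans (by norm_num) hn
  have hm : (1:ℝ) ≤ (n:ℝ) := by exact_mod_cast hn1
  have ht : (0:ℝ) < 2^n := by positivity
  have hs1 : (1:ℝ) ≤ Real.sqrt n := by
    have := Real.sqrt_le_sqrt hm
    simpa using this
  set g : (Fin n → ZMod 2) → ℝ :=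
    fun x => if (∑ i, (x i).val) = 1 then (-1:ℝ) else 1 with hgdef
  have habs : ∀ S : Finset (Fin n), S ≠ ∅ →
      |fhat g S| = 2*|(n:ℝ) - 2*(S.card:ℝ)|/2^n := by
    intro S hS
    rw [fhat_g1, if_neg hS, zero_sub, abs_neg, abs_div, abs_of_pos ht, abs_mul]
    norm_num
  have hgrp := sum_card_fn (n := n) (fun k => 2*|(n:ℝ) - 2*(k:ℝ)|/2^n)
  have hpull : ∑ k ∈ range (n+1), (n.choose k:ℝ) * (2*|(n:ℝ)-2*(k:ℝ)|/2^n)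
      = 2/2^n * ∑ k ∈ range (n+1), (n.choose k:ℝ) * |(n:ℝ)-2*(k:ℝ)| := by
    rw [Finset.mul_sum]
    refine Finset.sum_congr rfl fun k _ => ?_
    field_simp
  have hS1u := S1_upper n
  have hS1l := S1_lower hn1
  have key : ∑ S ∈ (univ : Finset (Finset (Fin n))).erase ∅, |fhat g S|
      = (∑ k ∈ range (n+1), (n.choose k:ℝ) * (2*|(n:ℝ)-2*(k:ℝ)|/2^n)) - 2*(n:ℝ)/2^n := by
    have h3 : ∑ S ∈ (univ : Finset (Finset (Fin n))).erase ∅, |fhat g S|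
        = ∑ S ∈ (univ : Finset (Finset (Fin n))).erase ∅, 2*|(n:ℝ) - 2*(S.card:ℝ)|/2^n :=
      Finset.sum_congr rfl fun S hS => habs S (Finset.ne_of_mem_erase hS)
    rw [h3, eq_sub_iff_add_eq, ← hgrp,
      ← Finset.sum_erase_add (univ : Finset (Finset (Fin n)))
        (fun S : Finset (Fin n) => 2*|(n:ℝ) - 2*(S.card:ℝ)|/2^n) (mem_univ ∅)]
    congr 1
    simp
  constructor
  · -- lower bound
    have hge : ∑ S ∈ (univ : Finset (Finset (Fin n))).erase ∅, |fhat g S|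
        ≤ ∑ S : Finset (Fin n), |fhat g S| :=
      Finset.sum_le_sum_of_subset_of_nonneg (Finset.erase_subset _ _)
        (fun _ _ _ => abs_nonneg _)
    have h20 : 2*(n:ℝ)/2^n ≤ 9/10 := by
      rw [div_le_iff₀ ht]
      have h20' : (20:ℝ)*(n:ℝ) ≤ 9*(2:ℝ)^n := by exact_mod_cast twenty_le n hn
      linarith
    have hchain : Real.sqrt n ≤ 2/2^n * ∑ k ∈ range (n+1), (n.choose k:ℝ) * |(n:ℝ)-2*(k:ℝ)| := by
      have hmul := mul_le_mul_of_nonneg_left hS1l (le_of_lt (by positivity : (0:ℝ) < 2/2^n))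
      have heq : 2/2^n * ((2:ℝ)^n * Real.sqrt n / 2) = Real.sqrt n := by
        field_simp
      linarith [hmul, heq.symm.le, heq.le]
    have hmain : Real.sqrt n - 9/10
        ≤ ∑ S ∈ (univ : Finset (Finset (Fin n))).erase ∅, |fhat g S| := by
      rw [key, hpull]
      linarith [h20, hchain]
    have hlast : (1/10:ℝ)*Real.sqrt n ≤ Real.sqrt n - 9/10 := by linarith [hs1]
    linarith [hge, hmain, hlast]
  · -- upper bound
    have h1 : ∀ S : Finset (Fin n),
        |fhat g S| ≤ (if S = ∅ then (1:ℝ) else 0) + 2*|(n:ℝ)-2*(S.card:ℝ)|/2^n := by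
      intro S
      rw [fhat_g1]
      refine le_trans (abs_sub _ _) ?_
      have e1 : |if S = ∅ then (1:ℝ) else 0| = if S = ∅ then (1:ℝ) else 0 := by
        split <;> simp
      have e2 : |2*((n:ℝ)-2*(S.card:ℝ))/2^n| = 2*|(n:ℝ)-2*(S.card:ℝ)|/2^n := by
        rw [abs_div, abs_of_pos ht, abs_mul]
        norm_num
      rw [e1, e2]
    have h2 : ∑ S : Finset (Fin n), |fhat g S|
        ≤ (∑ S : Finset (Fin n), (if S = ∅ then (1:ℝ) else 0))
          + ∑ S : Finset (Fin n), 2*|(n:ℝ)-2*(S.card:ℝ)|/2^n := by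
      rw [← Finset.sum_add_distrib]
      exact Finset.sum_le_sum fun S _ => h1 S
    have h3 : ∑ S : Finset (Fin n), (if S = ∅ then (1:ℝ) else 0) = 1 := by
      simp
    have h4 : ∑ S : Finset (Fin n), 2*|(n:ℝ)-2*(S.card:ℝ)|/2^n ≤ 2 * Real.sqrt n := by
      rw [hgrp, hpull]
      have hmul := mul_le_mul_of_nonneg_left hS1u (le_of_lt (by positivity : (0:ℝ) < 2/2^n))
      have heq : 2/2^n * ((2:ℝ)^n * Real.sqrt n) = 2 * Real.sqrt n := by
        field_simp
      linarith [hmul, heq.le]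
    have : (3:ℝ) * Real.sqrt n = Real.sqrt n + 2 * Real.sqrt n := by ring
    rw [this]
    linarith [h2, h3.le, h4, hs1]
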